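/- Let μ, μ_c, λ > 0 with λ + 2μ > 0. For X, Y ∈ ℝ^{3×3} with X n₀ = Y n₀ = 0 for a unit vector n₀, define W_mixt(X,Y) := μ⟨sym X, sym Y⟩ + μ_c⟨skew X, skew Y⟩ + (λμ/(λ+2μ)) tr(X) tr(Y). Then W_mixt(X,Y) = W_mixt(aX, aY) + ((μ+μ_c)/2) (n₀ᵀX)·(n₀ᵀY), where a = 1₃ − n₀n₀ᵀ. -/

import Mathlib

open Matrix

def frobInner (A B : Matrix (Fin 3) (Fin 3) ℝ) : ℝ := Matrix.trace (Aᵀ * B)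

noncomputable def symPart (A : Matrix (Fin 3) (Fin 3) ℝ) : Matrix (Fin 3) (Fin 3) ℝ :=
  (2 : ℝ)⁻¹ • (A + Aᵀ)

noncomputable def skewPart (A : Matrix (Fin 3) (Fin 3) ℝ) : Matrix (Fin 3) (Fin 3) ℝ :=
  (2 : ℝ)⁻¹ • (A - Aᵀ)

/-!
Write `P = n₀n₀ᵀ`, so `a = 1 - P` is a symmetric projector with `X a = X` and `Y a = Y`.
Since `⟨sym A, sym B⟩ = (tr(AᵀB) + tr(AB))/2` and `⟨skew A, skew B⟩ = (tr(AᵀB) - tr(AB))/2`,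
`W_mixt(X, Y)` only involves `tr(XᵀY)`, `tr(XY)`, `tr X` and `tr Y`. By cyclicity of the trace the
last three are unchanged under `X ↦ aX`, `Y ↦ aY`, while
`tr((aX)ᵀ(aY)) = tr(Xᵀ a Y) = tr(XᵀY) - tr(Xᵀ P Y) = tr(XᵀY) - (n₀ᵀX)·(n₀ᵀY)`.
-/

section Trace

variable {m R : Type*} [Fintype m] [CommRing R]

theorem trace_mul_transpose_eq_trace_transpose_mul (A B : Matrix m m R) :
    trace (A * Bᵀ) = trace (Aᵀ * B) := by
  rw [← trace_transpose, transpose_mul, transpose_transpose, trace_mul_comm]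

theorem trace_transpose_mul_vecMulVec_self_mul (X Y : Matrix m m R) (v : m → R) :
    trace (Xᵀ * vecMulVec v v * Y) = (v ᵥ* X) ⬝ᵥ (v ᵥ* Y) := by
  rw [mul_vecMulVec, vecMulVec_mul, trace_vecMulVec, mulVec_transpose]

variable {a X Y : Matrix m m R}

theorem trace_transpose_mul_mul_of_isProjector (haT : aᵀ = a) (haa : a * a = a) :
    trace ((a * X)ᵀ * (a * Y)) = trace (Xᵀ * a * Y) := by
  rw [transpose_mul, haT, Matrix.mul_assoc, ← Matrix.mul_assoc a a Y, haa, Matrix.mul_assoc]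

theorem trace_mul_of_mul_eq_self (hXa : X * a = X) : trace (a * X) = trace X := by
  rw [trace_mul_comm, hXa]

theorem trace_mul_mul_of_mul_eq_self (hXa : X * a = X) (hYa : Y * a = Y) :
    trace (a * X * (a * Y)) = trace (X * Y) := by
  rw [← Matrix.mul_assoc, Matrix.mul_assoc a X a, hXa, Matrix.mul_assoc,
    trace_mul_of_mul_eq_self (X := X * Y) (by rw [Matrix.mul_assoc, hYa])]

end Trace

section Projector

variable {m R : Type*} [DecidableEq m] [CommRing R]

theorem mul_one_sub_vecMulVec_of_mulVec_eq_zero [Fintype m] {Z : Matrix m m R} {v : m → R}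
    (hZ : Z *ᵥ v = 0) : Z * (1 - vecMulVec v v) = Z := by
  rw [Matrix.mul_sub, Matrix.mul_one, mul_vecMulVec, hZ, zero_vecMulVec, sub_zero]

theorem transpose_one_sub_vecMulVec_self (v : m → R) :
    (1 - vecMulVec v v)ᵀ = 1 - vecMulVec v v := by
  rw [transpose_sub, transpose_one, transpose_vecMulVec]

theorem one_sub_vecMulVec_self_mul_self [Fintype m] {v : m → R} (hv : v ⬝ᵥ v = 1) :
    (1 - vecMulVec v v) * (1 - vecMulVec v v) = 1 - vecMulVec v v := by
  rw [Matrix.sub_mul, Matrix.mul_sub, Matrix.mul_sub, vecMulVec_mul_vecMulVec, hv, one_smul]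
  simp only [Matrix.one_mul, Matrix.mul_one]
  abel

end Projector

theorem frobInner_symPart_symPart (A B : Matrix (Fin 3) (Fin 3) ℝ) :
    frobInner (symPart A) (symPart B) = (trace (Aᵀ * B) + trace (A * B)) / 2 := by
  simp only [frobInner, symPart, transpose_smul, transpose_add, transpose_transpose,
    Matrix.smul_mul, Matrix.mul_smul, Matrix.add_mul, Matrix.mul_add, trace_smul, trace_add,
    smul_eq_mul, trace_mul_transpose_eq_trace_transpose_mul]
  ring

theorem frobInner_skewPart_skewPart (A B : Matrix (Fin 3) (Fin 3) ℝ) :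
    frobInner (skewPart A) (skewPart B) = (trace (Aᵀ * B) - trace (A * B)) / 2 := by
  simp only [frobInner, skewPart, transpose_smul, transpose_sub, transpose_transpose,
    Matrix.smul_mul, Matrix.mul_smul, Matrix.sub_mul, Matrix.mul_sub, trace_smul, trace_sub,
    smul_eq_mul, trace_mul_transpose_eq_trace_transpose_mul]
  ring

theorem Wmixt_splitting_general
    (μ μc lam : ℝ)
    (n₀ : Fin 3 → ℝ) (hn : n₀ ⬝ᵥ n₀ = 1)
    (X Y : Matrix (Fin 3) (Fin 3) ℝ)
    (hX : X *ᵥ n₀ = 0) (hY : Y *ᵥ n₀ = 0) :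
    let Wmixt : Matrix (Fin 3) (Fin 3) ℝ → Matrix (Fin 3) (Fin 3) ℝ → ℝ := fun A B =>
      μ * frobInner (symPart A) (symPart B) + μc * frobInner (skewPart A) (skewPart B)
        + (lam * μ / (lam + 2 * μ)) * (Matrix.trace A * Matrix.trace B)
    let a : Matrix (Fin 3) (Fin 3) ℝ := 1 - vecMulVec n₀ n₀
    Wmixt X Y = Wmixt (a * X) (a * Y) + ((μ + μc) / 2) * ((n₀ ᵥ* X) ⬝ᵥ (n₀ ᵥ* Y)) := by
  intro Wmixt a
  have haT : aᵀ = a := transpose_one_sub_vecMulVec_self n₀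
  have haa : a * a = a := one_sub_vecMulVec_self_mul_self hn
  have hXa : X * a = X := mul_one_sub_vecMulVec_of_mulVec_eq_zero hX
  have hYa : Y * a = Y := mul_one_sub_vecMulVec_of_mulVec_eq_zero hY
  have hcross : trace ((a * X)ᵀ * (a * Y)) = trace (Xᵀ * Y) - (n₀ ᵥ* X) ⬝ᵥ (n₀ ᵥ* Y) := by
    rw [trace_transpose_mul_mul_of_isProjector haT haa, Matrix.mul_sub, Matrix.sub_mul,
      Matrix.mul_one, trace_sub, trace_transpose_mul_vecMulVec_self_mul]
  simp only [Wmixt, frobInner_symPart_symPart, frobInner_skewPart_skewPart, hcross,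
    trace_mul_mul_of_mul_eq_self hXa hYa, trace_mul_of_mul_eq_self hXa,
    trace_mul_of_mul_eq_self hYa]
  ring

/-- The Cosserat bilinear form `W_mixt` splits as
`W_mixt(X,Y) = W_mixt(aX, aY) + ((μ+μ_c)/2)(n₀ᵀX)·(n₀ᵀY)` for matrices annihilating the
unit vector `n₀` on the right, where `a = 1 − n₀n₀ᵀ`. -/
theorem Wmixt_splitting
    (μ μc lam : ℝ) (hμ : 0 < μ) (hμc : 0 < μc) (hlam : 0 < lam) (hl2μ : 0 < lam + 2 * μ)
    (n₀ : Fin 3 → ℝ) (hn : n₀ ⬝ᵥ n₀ = 1)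
    (X Y : Matrix (Fin 3) (Fin 3) ℝ)
    (hX : X *ᵥ n₀ = 0) (hY : Y *ᵥ n₀ = 0) :
    let Wmixt : Matrix (Fin 3) (Fin 3) ℝ → Matrix (Fin 3) (Fin 3) ℝ → ℝ := fun A B =>
      μ * frobInner (symPart A) (symPart B) + μc * frobInner (skewPart A) (skewPart B)
        + (lam * μ / (lam + 2 * μ)) * (Matrix.trace A * Matrix.trace B)
    let a : Matrix (Fin 3) (Fin 3) ℝ := 1 - vecMulVec n₀ n₀
    Wmixt X Y = Wmixt (a * X) (a * Y) + ((μ + μc) / 2) * ((n₀ ᵥ* X) ⬝ᵥ (n₀ ᵥ* Y)) :=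
  Wmixt_splitting_general μ μc lam n₀ hn X Y hX hY
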